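/- Let H be an N×M complex matrix. Let W be an N×r complex matrix with WᴴW = I_r and W·Wᴴ·H = H, and let F be an M×r complex matrix with FᴴF = I_r and H·F·Fᴴ = H. Then for every scalar λ ∈ ℂ, det(I_r + λ·Wᴴ·H·Hᴴ·W) = det(I_r + λ·Fᴴ·Hᴴ·H·F). In particular, the downlink spectral efficiency log₂ det(I_r + (P/(rN₀))·WᴴH Hᴴ W) equals the uplink spectral efficiency log₂ det(I_r + (P/(rN₀))·Fᴴ Hᴴ H F) when the uplink and downlink transmit powers are equal. -/

import Mathlib

/-!
If `W Wᴴ H = H` and `H F Fᴴ = H`, both Gram matrices factor through `A = Wᴴ H F`: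
`Wᴴ H Hᴴ W = A Aᴴ` and `Fᴴ Hᴴ H F = Aᴴ A`. Sylvester's determinant identity
`det (1 + X Y) = det (1 + Y X)` then equates the two determinants.
-/

open Matrix

namespace Matrix

variable {m n l R : Type*} [Fintype m] [Fintype n]

theorem det_one_add_smul_mul_comm [DecidableEq m] [DecidableEq n] [CommRing R] (c : R)
    (A : Matrix m n R) (B : Matrix n m R) :
    det (1 + c • (A * B)) = det (1 + c • (B * A)) := by
  rw [← Matrix.smul_mul, det_one_add_mul_comm, Matrix.mul_smul]

variable [NonUnitalCommSemiring R] [StarRing R]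

theorem conjTranspose_mul_self_eq_of_mul_conjTranspose_mul_eq {W : Matrix n m R}
    {H : Matrix n l R} (hWH : W * Wᴴ * H = H) : Hᴴ * H = (Wᴴ * H)ᴴ * (Wᴴ * H) := by
  rw [conjTranspose_mul, conjTranspose_conjTranspose, Matrix.mul_assoc, ← Matrix.mul_assoc W,
    hWH]

theorem mul_conjTranspose_self_eq_of_mul_mul_conjTranspose_eq {H : Matrix l m R}
    {F : Matrix m n R} (hHF : H * F * Fᴴ = H) : H * Hᴴ = (H * F) * (H * F)ᴴ := by
  rw [conjTranspose_mul, ← Matrix.mul_assoc, hHF]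

end Matrix

theorem det_uplink_downlink_duality_general {N M r : ℕ}
    (H : Matrix (Fin N) (Fin M) ℂ)
    (W : Matrix (Fin N) (Fin r) ℂ) (hWH : W * Wᴴ * H = H)
    (F : Matrix (Fin M) (Fin r) ℂ) (hHF : H * F * Fᴴ = H)
    (lam : ℂ) :
    ((1 : Matrix (Fin r) (Fin r) ℂ) + lam • (Wᴴ * H * Hᴴ * W)).det
      = ((1 : Matrix (Fin r) (Fin r) ℂ) + lam • (Fᴴ * Hᴴ * H * F)).det := by
  have downlink_gram : Wᴴ * H * Hᴴ * W = (Wᴴ * H * F) * (Wᴴ * H * F)ᴴ := by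
    rw [Matrix.mul_assoc Wᴴ, mul_conjTranspose_self_eq_of_mul_mul_conjTranspose_eq hHF]
    simp only [conjTranspose_mul, conjTranspose_conjTranspose, Matrix.mul_assoc]
  have uplink_gram : Fᴴ * Hᴴ * H * F = (Wᴴ * H * F)ᴴ * (Wᴴ * H * F) := by
    rw [Matrix.mul_assoc Fᴴ, conjTranspose_mul_self_eq_of_mul_conjTranspose_mul_eq hWH]
    simp only [conjTranspose_mul, Matrix.mul_assoc]
  rw [downlink_gram, uplink_gram, det_one_add_smul_mul_comm]

/-- Uplink–downlink spectral efficiency duality: if `W` has orthonormal columns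
spanning the column space of `H` (`Wᴴ W = I_r`, `W Wᴴ H = H`) and `F` has
orthonormal columns spanning the column space of `Hᴴ` (`Fᴴ F = I_r`,
`H F Fᴴ = H`), then for every `λ ∈ ℂ`,
`det(I_r + λ Wᴴ H Hᴴ W) = det(I_r + λ Fᴴ Hᴴ H F)`. -/
theorem det_uplink_downlink_duality {N M r : ℕ}
    (H : Matrix (Fin N) (Fin M) ℂ)
    (W : Matrix (Fin N) (Fin r) ℂ) (hW : Wᴴ * W = 1) (hWH : W * Wᴴ * H = H)
    (F : Matrix (Fin M) (Fin r) ℂ) (hF : Fᴴ * F = 1) (hHF : H * F * Fᴴ = H)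
    (lam : ℂ) :
    ((1 : Matrix (Fin r) (Fin r) ℂ) + lam • (Wᴴ * H * Hᴴ * W)).det
      = ((1 : Matrix (Fin r) (Fin r) ℂ) + lam • (Fᴴ * Hᴴ * H * F)).det :=
  det_uplink_downlink_duality_general H W hWH F hHF lam
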